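/- Let N ≥ 2 and define F : ℝ^{2N} → ℝ^{2N-1} by F(q,p) = (a₁,…,a_{N-1},b₁,…,b_N) with a_i = e^{q_i−q_{i+1}} and b_i = −p_i. Then F is a Poisson map from the canonical symplectic bracket on ℝ^{2N} to the linear Toda bracket π₁ on ℝ^{2N-1}: denoting by {f,g} = Σ_{k=1}^{N} (∂f/∂q_k · ∂g/∂p_k − ∂f/∂p_k · ∂g/∂q_k) the canonical bracket, one has for all admissible indices: {a_i∘F, a_j∘F} = 0, {b_i∘F, b_j∘F} = 0, and {a_i∘F, b_j∘F}(q,p) = e^{q_i−q_{i+1}} (δ_{i+1,j} − δ_{i,j}) (i.e. {a_i, b_i} = −a_i, {a_i, b_{i+1}} = a_i, and all other brackets of coordinate functions vanish, evaluated at F(q,p)). -/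

import Mathlib

/-!
`a_i ∘ F = exp (q_i - q_{i+1})` depends only on `q` and `b_j ∘ F = -p_j` only on `p`, so in
`{f, g} = Σ_k (∂_{q_k} f ∂_{p_k} g - ∂_{p_k} f ∂_{q_k} g)` every term of `{a_i, a_j}` and of
`{b_i, b_j}` has a vanishing factor, while `{a_i, b_j} = Σ_k ∂_{q_k} a_i ∂_{p_k} b_j = -∂_{q_j} a_i`
and `∂_{q_j} a_i = a_i (δ_{ij} - δ_{i+1,j})`.
-/

open Real

/-- The canonical Poisson bracket on `ℝ^N × ℝ^N` (coordinates `(q,p)`):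
`{f,g} = Σ_k (∂f/∂q_k ∂g/∂p_k − ∂f/∂p_k ∂g/∂q_k)`. -/
noncomputable def canPB (N : ℕ) (f g : (Fin N → ℝ) × (Fin N → ℝ) → ℝ)
    (x : (Fin N → ℝ) × (Fin N → ℝ)) : ℝ :=
  ∑ k : Fin N,
    (fderiv ℝ f x (Pi.single k 1, 0) * fderiv ℝ g x (0, Pi.single k 1)
      - fderiv ℝ f x (0, Pi.single k 1) * fderiv ℝ g x (Pi.single k 1, 0))

/-- The Flaschka coordinate function `a_i ∘ F = e^{q_i - q_{i+1}}`. -/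
noncomputable def aF (N : ℕ) (i : Fin (N-1)) : (Fin N → ℝ) × (Fin N → ℝ) → ℝ :=
  fun x => Real.exp (x.1 ⟨i.val, by have := i.isLt; omega⟩ -
    x.1 ⟨i.val + 1, by have := i.isLt; omega⟩)

/-- The Flaschka coordinate function `b_j ∘ F = -p_j`. -/
def bF (N : ℕ) (j : Fin N) : (Fin N → ℝ) × (Fin N → ℝ) → ℝ :=
  fun x => -(x.2 j)

section CanonicalBracket

variable {N : ℕ} {f g : (Fin N → ℝ) × (Fin N → ℝ) → ℝ} {x : (Fin N → ℝ) × (Fin N → ℝ)}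

theorem canPB_eq_zero_of_fderiv_snd (hf : ∀ w, fderiv ℝ f x (0, w) = 0)
    (hg : ∀ w, fderiv ℝ g x (0, w) = 0) : canPB N f g x = 0 := by
  simp [canPB, hf, hg]

theorem canPB_eq_zero_of_fderiv_fst (hf : ∀ v, fderiv ℝ f x (v, 0) = 0)
    (hg : ∀ v, fderiv ℝ g x (v, 0) = 0) : canPB N f g x = 0 := by
  simp [canPB, hf, hg]

theorem canPB_eq_sum_of_fderiv_snd_fst (hf : ∀ w, fderiv ℝ f x (0, w) = 0)
    (hg : ∀ v, fderiv ℝ g x (v, 0) = 0) :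
    canPB N f g x = ∑ k, fderiv ℝ f x (Pi.single k 1, 0) * fderiv ℝ g x (0, Pi.single k 1) := by
  simp [canPB, hf, hg]

end CanonicalBracket

section Flaschka

variable {N : ℕ} (x : (Fin N → ℝ) × (Fin N → ℝ))

noncomputable def qDiff (i : Fin (N-1)) : ((Fin N → ℝ) × (Fin N → ℝ)) →L[ℝ] ℝ :=
  (ContinuousLinearMap.proj (R := ℝ) (φ := fun _ : Fin N => ℝ) ⟨i.val, by omega⟩ -
    ContinuousLinearMap.proj (R := ℝ) (φ := fun _ : Fin N => ℝ) ⟨i.val + 1, by omega⟩).comp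
    (ContinuousLinearMap.fst ℝ _ _)

theorem hasFDerivAt_aF (i : Fin (N-1)) : HasFDerivAt (aF N i) (aF N i x • qDiff i) x :=
  (Real.hasDerivAt_exp (qDiff i x)).comp_hasFDerivAt x (qDiff i).hasFDerivAt

theorem hasFDerivAt_bF (j : Fin N) :
    HasFDerivAt (bF N j) (-(ContinuousLinearMap.proj j).comp (ContinuousLinearMap.snd ℝ _ _)) x :=
  show HasFDerivAt (-(ContinuousLinearMap.proj j).comp (ContinuousLinearMap.snd ℝ _ _) :
      ((Fin N → ℝ) × (Fin N → ℝ)) →L[ℝ] ℝ) _ x from ContinuousLinearMap.hasFDerivAt _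

theorem fderiv_aF_apply (i : Fin (N-1)) (v : (Fin N → ℝ) × (Fin N → ℝ)) :
    fderiv ℝ (aF N i) x v = aF N i x * (v.1 ⟨i.val, by omega⟩ - v.1 ⟨i.val + 1, by omega⟩) := by
  rw [(hasFDerivAt_aF x i).fderiv]
  rfl

theorem fderiv_bF_apply (j : Fin N) (v : (Fin N → ℝ) × (Fin N → ℝ)) :
    fderiv ℝ (bF N j) x v = -v.2 j := by
  rw [(hasFDerivAt_bF x j).fderiv]
  rfl

theorem canPB_aF_aF (i j : Fin (N-1)) : canPB N (aF N i) (aF N j) x = 0 :=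
  canPB_eq_zero_of_fderiv_snd (by simp [fderiv_aF_apply]) (by simp [fderiv_aF_apply])

theorem canPB_bF_bF (i j : Fin N) : canPB N (bF N i) (bF N j) x = 0 :=
  canPB_eq_zero_of_fderiv_fst (by simp [fderiv_bF_apply]) (by simp [fderiv_bF_apply])

theorem canPB_aF_bF (i : Fin (N-1)) (j : Fin N) :
    canPB N (aF N i) (bF N j) x =
      aF N i x * ((if j.val = i.val + 1 then 1 else 0) - (if j.val = i.val then 1 else 0)) := by
  rw [canPB_eq_sum_of_fderiv_snd_fst (by simp [fderiv_aF_apply]) (by simp [fderiv_bF_apply])]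
  simp only [fderiv_aF_apply, fderiv_bF_apply, Pi.single_apply, mul_neg, mul_ite, mul_one,
    mul_zero, Finset.sum_neg_distrib, Finset.sum_ite_eq, Finset.mem_univ, if_true]
  simp only [Fin.ext_iff, @eq_comm _ (j : ℕ)]
  ring

end Flaschka

/-- The Flaschka map is Poisson from the canonical bracket to the linear Toda
bracket `π₁`: `{a_i,a_j} = 0`, `{b_i,b_j} = 0`, and
`{a_i,b_j} = e^{q_i-q_{i+1}} (δ_{i+1,j} - δ_{i,j})` (one-based indices). -/
theorem stmt13 (N : ℕ) :
    ∀ x : (Fin N → ℝ) × (Fin N → ℝ),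
      (∀ i j : Fin (N-1), canPB N (aF N i) (aF N j) x = 0)
      ∧ (∀ i j : Fin N, canPB N (bF N i) (bF N j) x = 0)
      ∧ (∀ (i : Fin (N-1)) (j : Fin N),
          canPB N (aF N i) (bF N j) x
            = Real.exp (x.1 ⟨i.val, by have := i.isLt; omega⟩ -
                x.1 ⟨i.val + 1, by have := i.isLt; omega⟩) *
              ((if j.val = i.val + 1 then 1 else 0) - (if j.val = i.val then 1 else 0))) :=
  fun x => ⟨canPB_aF_aF x, canPB_bF_bF x, canPB_aF_bF x⟩
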